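/- Let p be an odd prime and let α, z be p-adic integers such that ⟨−α⟩_p is even. Then (Σ_{k=0}^{p−1} (α/2)_k ((1−α)/2)_k / (k!)² · z^k)² ≡ Σ_{k=0}^{p−1} (α)_k (1−α)_k (1/2)_k / (k!)³ · z^k (mod p²), a congruence in ℤ_p. -/

import Mathlib

/-!
Put `a = α/2` and `b = (1 - α)/2`, so that `a + b = 1/2`. Clausen's identity
`₂F₁(a, b; 1 | z)² = ₃F₂(2a, 2b, 1/2; 1, 1 | z)` holds coefficientwise (by a Wilf–Zeilberger
recurrence), so the difference of the truncations is the sum of the terms `A_i A_j z^(i+j)` with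
`i, j < p ≤ i + j`, where `A_k = (a)_k (b)_k / k!²`. Writing `⟨-α⟩_p = 2c` and `p = 2d + 1`, both
`a + c` and `b + (d - c)` are divisible by `p`. As `i + j > 2c` and `i + j > 2(d - c)`, one of
`(a)_i, (a)_j` contains the factor `a + c` and one of `(b)_i, (b)_j` the factor `b + (d - c)`,
while `i!` and `j!` are units: every such term is divisible by `p²`.
-/

open Finset

open scoped Nat

section Clausen

variable {K : Type*} [Field K]

noncomputable def hypergeom21Coeff (a b : K) (k : ℕ) : K :=
  (ascPochhammer K k).eval a * (ascPochhammer K k).eval b / (k ! : K) ^ 2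

noncomputable def hypergeom32Coeff (a b c : K) (k : ℕ) : K :=
  (ascPochhammer K k).eval a * (ascPochhammer K k).eval b * (ascPochhammer K k).eval c /
    (k ! : K) ^ 3

variable [CharZero K]

lemma hypergeom21Coeff_succ (a b : K) (k : ℕ) :
    hypergeom21Coeff a b (k + 1) =
      hypergeom21Coeff a b k * ((a + k) * (b + k) / ((k : K) + 1) ^ 2) := by
  have := Nat.cast_add_one_ne_zero (R := K) k
  have : (k ! : K) ≠ 0 := Nat.cast_ne_zero.mpr k.factorial_ne_zero
  simp only [hypergeom21Coeff, ascPochhammer_succ_eval, Nat.factorial_succ, Nat.cast_mul,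
    Nat.cast_succ]
  field_simp

lemma hypergeom32Coeff_succ (a b c : K) (k : ℕ) :
    hypergeom32Coeff a b c (k + 1) =
      hypergeom32Coeff a b c k * ((a + k) * (b + k) * (c + k) / ((k : K) + 1) ^ 3) := by
  have := Nat.cast_add_one_ne_zero (R := K) k
  have : (k ! : K) ≠ 0 := Nat.cast_ne_zero.mpr k.factorial_ne_zero
  simp only [hypergeom32Coeff, ascPochhammer_succ_eval, Nat.factorial_succ, Nat.cast_mul,
    Nat.cast_succ]
  field_simp

/-- A Wilf–Zeilberger pair for Clausen's identity: summed over `i` with `i + m` fixed, the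
right-hand side telescopes. -/
lemma hypergeom21Coeff_mul_wz {a b : K} (hab : a + b = 1 / 2) (i m : ℕ) :
    ((i + m + 1 : ℕ) : K) ^ 3 * (hypergeom21Coeff a b i * hypergeom21Coeff a b (m + 1)) -
        (2 * a + (i + m : ℕ)) * (2 * b + (i + m : ℕ)) * (1 / 2 + (i + m : ℕ)) *
          (hypergeom21Coeff a b i * hypergeom21Coeff a b m) =
      ((i : K) + 1) ^ 2 * (2 * ((i : K) + 1) - 3 * ((i + m + 1 : ℕ) : K)) *
          (hypergeom21Coeff a b (i + 1) * hypergeom21Coeff a b m) -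
        (i : K) ^ 2 * (2 * (i : K) - 3 * ((i + m + 1 : ℕ) : K)) *
          (hypergeom21Coeff a b i * hypergeom21Coeff a b (m + 1)) := by
  obtain rfl : b = 1 / 2 - a := by linear_combination hab
  have := Nat.cast_add_one_ne_zero (R := K) i
  have := Nat.cast_add_one_ne_zero (R := K) m
  rw [hypergeom21Coeff_succ, hypergeom21Coeff_succ]
  push_cast
  field_simp
  ring

lemma sum_range_hypergeom21Coeff_mul_succ {a b : K} (hab : a + b = 1 / 2) (n : ℕ) :
    ((n : K) + 1) ^ 3 *
        ∑ i ∈ range (n + 2), hypergeom21Coeff a b i * hypergeom21Coeff a b (n + 1 - i) =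
      (2 * a + n) * (2 * b + n) * (1 / 2 + n) *
        ∑ i ∈ range (n + 1), hypergeom21Coeff a b i * hypergeom21Coeff a b (n - i) := by
  set c := hypergeom21Coeff a b
  let G : ℕ → K := fun i => (i : K) ^ 2 * (2 * i - 3 * ((n : K) + 1)) * (c i * c (n + 1 - i))
  have htelescope : ∀ i ∈ range (n + 1),
      ((n : K) + 1) ^ 3 * (c i * c (n + 1 - i)) -
        (2 * a + n) * (2 * b + n) * (1 / 2 + n) * (c i * c (n - i)) = G (i + 1) - G i := by
    intro i hi
    have hin : i + (n - i) = n := by grind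
    have hwz := hypergeom21Coeff_mul_wz hab i (n - i)
    rw [hin, show n - i + 1 = n + 1 - i by grind] at hwz
    simp only [G, Nat.add_sub_add_right]
    push_cast at hwz ⊢
    linear_combination hwz
  have hsum := sum_congr rfl htelescope
  rw [sum_range_sub, sum_sub_distrib, ← mul_sum, ← mul_sum] at hsum
  rw [sum_range_succ, Nat.sub_self]
  simp only [G, Nat.sub_self, Nat.sub_zero] at hsum
  push_cast at hsum
  linear_combination hsum

theorem sum_antidiagonal_hypergeom21Coeff_mul {a b : K} (hab : a + b = 1 / 2) (n : ℕ) :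
    ∑ x ∈ antidiagonal n, hypergeom21Coeff a b x.1 * hypergeom21Coeff a b x.2 =
      hypergeom32Coeff (2 * a) (2 * b) (1 / 2) n := by
  rw [Nat.sum_antidiagonal_eq_sum_range_succ
    (fun i j => hypergeom21Coeff a b i * hypergeom21Coeff a b j)]
  induction n with
  | zero => simp [hypergeom21Coeff, hypergeom32Coeff]
  | succ n ih =>
    refine mul_left_cancel₀ (pow_ne_zero 3 (Nat.cast_add_one_ne_zero (R := K) n)) ?_
    rw [sum_range_hypergeom21Coeff_mul_succ hab, ih, hypergeom32Coeff_succ]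
    field_simp

end Clausen

lemma ascPochhammer_eval_eq_prod_range {R : Type*} [CommSemiring R] (k : ℕ) (y : R) :
    (ascPochhammer R k).eval y = ∏ t ∈ range k, (y + t) := by
  induction k with
  | zero => simp
  | succ k ih => rw [ascPochhammer_succ_eval, ih, prod_range_succ]

section Ultrametric

variable {K : Type*} [NormedField K] [IsUltrametricDist K] {y : K}

lemma norm_add_natCast_le_one (hy : ‖y‖ ≤ 1) (t : ℕ) : ‖y + t‖ ≤ 1 :=
  (IsUltrametricDist.norm_add_le_max _ _).trans
    (max_le hy (IsUltrametricDist.norm_natCast_le_one K t))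

lemma norm_ascPochhammer_eval_le_one (hy : ‖y‖ ≤ 1) (k : ℕ) :
    ‖(ascPochhammer K k).eval y‖ ≤ 1 := by
  rw [ascPochhammer_eval_eq_prod_range, norm_prod]
  exact prod_le_one (fun _ _ => norm_nonneg _) fun t _ => norm_add_natCast_le_one hy t

lemma norm_ascPochhammer_eval_le_of_lt (hy : ‖y‖ ≤ 1) {r : ℝ} {t k : ℕ} (htk : t < k)
    (ht : ‖y + t‖ ≤ r) : ‖(ascPochhammer K k).eval y‖ ≤ r := by
  rw [ascPochhammer_eval_eq_prod_range, norm_prod, ← prod_erase_mul _ _ (mem_range.mpr htk)]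
  have hrest : ∏ s ∈ (range k).erase t, ‖y + s‖ ≤ 1 :=
    prod_le_one (fun _ _ => norm_nonneg _) fun s _ => norm_add_natCast_le_one hy s
  simpa using mul_le_mul hrest ht (norm_nonneg _) zero_le_one

lemma norm_ascPochhammer_eval_mul_le (hy : ‖y‖ ≤ 1) {r : ℝ} {t i j : ℕ} (hij : 2 * t < i + j)
    (ht : ‖y + t‖ ≤ r) :
    ‖(ascPochhammer K i).eval y * (ascPochhammer K j).eval y‖ ≤ r := by
  rw [norm_mul]
  rcases lt_or_ge t i with hti | hti
  · simpa using mul_le_mul (norm_ascPochhammer_eval_le_of_lt hy hti ht)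
      (norm_ascPochhammer_eval_le_one hy j) (norm_nonneg _) ((norm_nonneg _).trans ht)
  · simpa using mul_le_mul (norm_ascPochhammer_eval_le_one hy i)
      (norm_ascPochhammer_eval_le_of_lt hy (by omega) ht) (norm_nonneg _) zero_le_one

end Ultrametric

lemma sq_sum_range_sub_sum_range_antidiagonal {R : Type*} [CommRing R] (f : ℕ → R) (z : R)
    (N : ℕ) :
    (∑ k ∈ range N, f k * z ^ k) ^ 2 -
        ∑ n ∈ range N, (∑ x ∈ antidiagonal n, f x.1 * f x.2) * z ^ n =
      ∑ x ∈ range N ×ˢ range N with N ≤ x.1 + x.2, f x.1 * f x.2 * z ^ (x.1 + x.2) := by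
  have hsq : (∑ k ∈ range N, f k * z ^ k) ^ 2 =
      ∑ x ∈ range N ×ˢ range N, f x.1 * f x.2 * z ^ (x.1 + x.2) := by
    rw [sq, sum_mul_sum, ← sum_product']
    exact sum_congr rfl fun x _ => by ring
  have hlow : ∑ n ∈ range N, (∑ x ∈ antidiagonal n, f x.1 * f x.2) * z ^ n =
      ∑ x ∈ range N ×ˢ range N with x.1 + x.2 < N, f x.1 * f x.2 * z ^ (x.1 + x.2) := by
    rw [← sum_fiberwise_of_maps_to (g := fun x : ℕ × ℕ => x.1 + x.2) (t := range N)
      (fun x hx => by simpa using (mem_filter.mp hx).2)]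
    refine sum_congr rfl fun n hn => ?_
    have hfiber : {x ∈ {x ∈ range N ×ˢ range N | x.1 + x.2 < N} | x.1 + x.2 = n} =
        antidiagonal n := by
      ext x
      simp only [mem_filter, mem_product, mem_range, HasAntidiagonal.mem_antidiagonal] at hn ⊢
      omega
    rw [hfiber, sum_mul]
    exact sum_congr rfl fun x hx => by rw [HasAntidiagonal.mem_antidiagonal.mp hx]
  rw [hsq, hlow, ← sum_filter_add_sum_filter_not _ (fun x => x.1 + x.2 < N)]
  simp only [not_lt, add_sub_cancel_left]

section Padic

variable {p : ℕ} [Fact p.Prime]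

lemma Padic.norm_factorial_eq_one {k : ℕ} (hk : k < p) : ‖(k ! : ℚ_[p])‖ = 1 :=
  Padic.norm_natCast_eq_one_iff.mpr <|
    (Nat.Prime.coprime_iff_not_dvd Fact.out).mpr fun h => by
      rw [Nat.Prime.dvd_factorial Fact.out] at h; omega

lemma PadicInt.norm_add_toZMod_neg_val_le (α : ℤ_[p]) :
    ‖(α : ℚ_[p]) + (PadicInt.toZMod (-α)).val‖ ≤ (p : ℝ)⁻¹ := by
  set x : ℤ_[p] := α + ((PadicInt.toZMod (-α)).val : ℤ_[p]) with hx
  have hlt : ‖x‖ < 1 := by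
    rw [← PadicInt.mem_nonunits, ← IsLocalRing.mem_maximalIdeal, ← PadicInt.ker_toZMod,
      RingHom.mem_ker, hx]
    simp
  have hle := (PadicInt.norm_le_pow_iff_norm_lt_pow_add_one x (-1)).mpr (by simpa using hlt)
  rw [zpow_neg_one, ← PadicInt.padic_norm_e_of_padicInt] at hle
  rwa [hx, PadicInt.coe_add, PadicInt.coe_natCast] at hle

lemma Padic.norm_hypergeom21Coeff_mul_le {a b : ℚ_[p]} (ha : ‖a‖ ≤ 1) (hb : ‖b‖ ≤ 1)
    {s t i j : ℕ} (has : ‖a + s‖ ≤ (p : ℝ)⁻¹) (hbt : ‖b + t‖ ≤ (p : ℝ)⁻¹) (hi : i < p)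
    (hj : j < p) (hsij : 2 * s < i + j) (htij : 2 * t < i + j) :
    ‖hypergeom21Coeff a b i * hypergeom21Coeff a b j‖ ≤ (p : ℝ) ^ (-2 : ℤ) := by
  have hsplit : hypergeom21Coeff a b i * hypergeom21Coeff a b j =
      (ascPochhammer ℚ_[p] i).eval a * (ascPochhammer ℚ_[p] j).eval a *
        ((ascPochhammer ℚ_[p] i).eval b * (ascPochhammer ℚ_[p] j).eval b) /
          ((i ! : ℚ_[p]) ^ 2 * (j ! : ℚ_[p]) ^ 2) := by
    simp only [hypergeom21Coeff]; ring
  have hden : ‖(i ! : ℚ_[p]) ^ 2 * (j ! : ℚ_[p]) ^ 2‖ = 1 := by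
    rw [norm_mul, norm_pow, norm_pow, Padic.norm_factorial_eq_one hi,
      Padic.norm_factorial_eq_one hj, one_pow, one_mul]
  rw [hsplit, norm_div, hden, div_one, norm_mul, zpow_neg, zpow_two, mul_inv]
  exact mul_le_mul (norm_ascPochhammer_eval_mul_le ha hsij has)
    (norm_ascPochhammer_eval_mul_le hb htij hbt) (norm_nonneg _) (by positivity)

theorem Padic.norm_sq_sum_hypergeom21Coeff_sub_sum_hypergeom32Coeff_le {a b : ℚ_[p]}
    (hab : a + b = 1 / 2) (ha : ‖a‖ ≤ 1) (hb : ‖b‖ ≤ 1) {s t : ℕ}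
    (has : ‖a + s‖ ≤ (p : ℝ)⁻¹) (hbt : ‖b + t‖ ≤ (p : ℝ)⁻¹) (hs : 2 * s < p) (ht : 2 * t < p)
    {z : ℚ_[p]} (hz : ‖z‖ ≤ 1) :
    ‖(∑ k ∈ range p, hypergeom21Coeff a b k * z ^ k) ^ 2 -
        ∑ k ∈ range p, hypergeom32Coeff (2 * a) (2 * b) (1 / 2) k * z ^ k‖ ≤
      (p : ℝ) ^ (-2 : ℤ) := by
  simp_rw [← sum_antidiagonal_hypergeom21Coeff_mul hab, sq_sum_range_sub_sum_range_antidiagonal]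
  refine IsUltrametricDist.norm_sum_le_of_forall_le_of_nonneg (by positivity) fun x hx => ?_
  simp only [mem_filter, mem_product, mem_range] at hx
  rw [norm_mul, norm_pow]
  simpa using mul_le_mul (Padic.norm_hypergeom21Coeff_mul_le ha hb has hbt hx.1.1 hx.1.2
    (by omega) (by omega)) (pow_le_one₀ (norm_nonneg z) hz) (by positivity) (by positivity)

end Padic

/-- **Mao–Pan congruence (1.3), a Clausen-type congruence.** For an odd prime `p` and
`α, z ∈ ℤ_p` with `⟨-α⟩_p` even,
`(₂F₁[α/2, (1-α)/2; 1 | z]_{p-1})² ≡ ₃F₂[α, 1-α, 1/2; 1, 1 | z]_{p-1} (mod p²)` in `ℤ_p`. -/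
theorem clausen_congruence (p : ℕ) [Fact p.Prime] (hp : Odd p) (α z : ℤ_[p])
    (hα : Even ((PadicInt.toZMod (-α)).val)) :
    ‖(∑ k ∈ Finset.range p,
          (ascPochhammer ℚ_[p] k).eval ((α : ℚ_[p]) / 2) *
            (ascPochhammer ℚ_[p] k).eval ((1 - (α : ℚ_[p])) / 2) /
              ((k.factorial : ℚ_[p]))^2 * (z : ℚ_[p])^k)^2 -
      ∑ k ∈ Finset.range p,
          (ascPochhammer ℚ_[p] k).eval (α : ℚ_[p]) *
            (ascPochhammer ℚ_[p] k).eval (1 - (α : ℚ_[p])) *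
              (ascPochhammer ℚ_[p] k).eval (1 / 2) /
                ((k.factorial : ℚ_[p]))^3 * (z : ℚ_[p])^k‖
      ≤ (p : ℝ) ^ (-2 : ℤ) := by
  obtain ⟨c, hc⟩ := hα
  obtain ⟨d, hd⟩ := hp
  have hcp : c + c < p := hc ▸ ZMod.val_lt _
  have hpd : (p : ℚ_[p]) = 2 * d + 1 := by exact_mod_cast hd
  have hv := PadicInt.norm_add_toZMod_neg_val_le α
  rw [hc] at hv
  have h2 : ‖(2 : ℚ_[p])‖ = 1 := by
    exact_mod_cast Padic.norm_natCast_eq_one_iff.mpr (Nat.coprime_two_right.mpr ⟨d, hd⟩)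
  have hhalf (x : ℤ_[p]) : ‖(x : ℚ_[p]) / 2‖ ≤ 1 := by
    rw [norm_div, h2, div_one, PadicInt.padic_norm_e_of_padicInt]
    exact x.norm_le_one
  have has : ‖(α : ℚ_[p]) / 2 + c‖ ≤ (p : ℝ)⁻¹ := by
    rw [show (α : ℚ_[p]) / 2 + c = (α + (c + c : ℕ)) / 2 by push_cast; ring, norm_div, h2, div_one]
    exact hv
  have hbt : ‖(1 - (α : ℚ_[p])) / 2 + (d - c : ℕ)‖ ≤ (p : ℝ)⁻¹ := by
    rw [show (1 - (α : ℚ_[p])) / 2 + (d - c : ℕ) = (p - (α + (c + c : ℕ))) / 2 by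
      rw [hpd, Nat.cast_sub (by omega)]; push_cast; ring, norm_div, h2, div_one, sub_eq_add_neg]
    exact (IsUltrametricDist.norm_add_le_max _ _).trans
      (max_le Padic.norm_p.le (by rwa [norm_neg]))
  have key := Padic.norm_sq_sum_hypergeom21Coeff_sub_sum_hypergeom32Coeff_le (by ring)
    (hhalf α) (by simpa using hhalf (1 - α)) has hbt (by omega) (by omega)
    ((PadicInt.padic_norm_e_of_padicInt z).trans_le z.norm_le_one)
  rwa [mul_div_cancel₀ _ two_ne_zero, mul_div_cancel₀ _ two_ne_zero] at key
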